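/- arXiv:0811.4263 — 6 statements merged into one kernel-verified Lean document; each statement's English description precedes it below -/
import Mathlib

section
/- Let N ≥ 1, let β_1,…,β_N be simple roots of a root system (or more generally, elements with pairing ⟨β_i^∨, β_j⟩ = β_{ij} coming from a generalized Cartan matrix), and define for ε ∈ {+,-}^N and 1 ≤ i < j ≤ N the integer α_{ij}^ε := ⟨β_i^∨, (∏_{i<k<j, ε_k=-} s_{β_k})(β_j)⟩, where the product of reflections is taken in increasing order of k. Then α_{ij}^ε = ∑_{k≥1} ∑_{i=i_0<i_1<…<i_k=j, ε_{i_x}=- for all x with 0<x<k} (-1)^{k+1} ∏_{x=0}^{k-1} β_{i_x i_{x+1}}, where β_{pq} = ⟨β_p^∨, β_q⟩. -/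
open Finset

/-- Product of `β` over consecutive pairs of a list of indices. -/
def chainProd (β : ℕ → ℕ → ℤ) : List ℕ → ℤ
  | p :: q :: t => β p q * chainProd β (q :: t)
  | _ => 1

/-- The chain-sum invariant `α_{ij}^ε`: sum over chains `i = i_0 < … < i_k = j`
whose intermediate indices all have sign `-` (encoded as `false`), of
`(-1)^(k+1) ∏ β_{i_x i_{x+1}}`; chains are encoded by the set of intermediate indices. -/
def alphaC (β : ℕ → ℕ → ℤ) (ε : ℕ → Bool) (i j : ℕ) : ℤ :=
  ∑ S ∈ ((Finset.Ioo i j).filter fun k => ε k = false).powerset,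
    (-1 : ℤ) ^ S.card * chainProd β (i :: S.sort (· ≤ ·) ++ [j])

/-- `C_i^ε = a_i + ∑_{j>i, ε_j = +} α_{ij}^ε a_j`. -/
def Cc (N : ℕ) (β : ℕ → ℕ → ℤ) (a : ℕ → ℤ) (ε : ℕ → Bool) (i : ℕ) : ℤ :=
  a i + ∑ j ∈ (Finset.Ioo i N).filter fun j => ε j = true, alphaC β ε i j * a j

/-- `x` is the family `x^ε` defined by downward recursion:
`x^ε_i = -a_i` if `ε_i = +`, and `x^ε_i = -∑_{j>i} β_{ij} x^ε_j` if `ε_i = -`. -/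
def IsBSx (N : ℕ) (β : ℕ → ℕ → ℤ) (a : ℕ → ℤ) (x : (ℕ → Bool) → ℕ → ℤ) : Prop :=
  ∀ ε : ℕ → Bool, ∀ i < N,
    (ε i = true → x ε i = -a i) ∧
    (ε i = false → x ε i = -∑ j ∈ Finset.Ioo i N, β i j * x ε j)

/-- `φ_m(e_i^+) = m_i + a_i`. -/
def phiP (a m : ℕ → ℤ) (i : ℕ) : ℤ := m i + a i

/-- `φ_m(e_i^-) = -m_i - ∑_{j>i} β_{ij} m_j`. -/
def phiM (N : ℕ) (β : ℕ → ℕ → ℤ) (m : ℕ → ℤ) (i : ℕ) : ℤ :=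
  -m i - ∑ j ∈ Finset.Ioo i N, β i j * m j

/-- Sign vector attached to a finite set `S` of indices: `+` on `S`, `-` off `S`. -/
def epsOf (S : Finset ℕ) : ℕ → Bool := fun k => decide (k ∈ S)

/-- The weight `m^ε = ∏_{ε_i = +} λ_i ∏_{ε_i = -} (1 - λ_i)`, for the sign vector `epsOf S`. -/
def wt (N : ℕ) (lam : ℕ → ℝ) (S : Finset ℕ) : ℝ :=
  ∏ i ∈ Finset.range N, if i ∈ S then lam i else 1 - lam i

lemma chainProd_cons (β : ℕ → ℕ → ℤ) (p q : ℕ) (t : List ℕ) :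
    chainProd β (p :: q :: t) = β p q * chainProd β (q :: t) := rfl

lemma key {V : Type*} [AddCommGroup V] [Module ℤ V]
    (b : ℕ → V) (c : ℕ → V →ₗ[ℤ] ℤ) (j : ℕ) :
    ∀ n (F : Finset ℕ), F.card = n → ∀ p,
      c p ((F.sort (· ≤ ·)).foldr (fun k v => v - c k v • b k) (b j))
        = ∑ S ∈ F.powerset, (-1 : ℤ) ^ S.card *
            chainProd (fun p q => c p (b q)) (p :: S.sort (· ≤ ·) ++ [j]) := by
  intro n
  induction n with
  | zero =>
    intro F hF p
    rw [Finset.card_eq_zero] at hF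
    subst hF
    simp [chainProd]
  | succ n ih =>
    intro F hF p
    have hne : F.Nonempty := by rw [← Finset.card_pos, hF]; omega
    set k := F.min' hne with hk
    have hkF : k ∈ F := F.min'_mem hne
    have hE : F = insert k (F.erase k) := (Finset.insert_erase hkF).symm
    have hkE : k ∉ F.erase k := Finset.notMem_erase k F
    have hcard : (F.erase k).card = n := by
      rw [Finset.card_erase_of_mem hkF, hF]; rfl
    have hlt : ∀ m ∈ F.erase k, k < m := fun m hm =>
      lt_of_le_of_ne (F.min'_le m (Finset.mem_of_mem_erase hm))
        (Ne.symm (Finset.ne_of_mem_erase hm))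
    have hsort : F.sort (· ≤ ·) = k :: (F.erase k).sort (· ≤ ·) := by
      conv_lhs => rw [hE]
      exact Finset.sort_insert _ (fun m hm => (hlt m hm).le) hkE
    have hsplit : ∀ g : Finset ℕ → ℤ, ∑ S ∈ F.powerset, g S
        = ∑ S ∈ (F.erase k).powerset, g S
          + ∑ S ∈ (F.erase k).powerset, g (insert k S) := by
      intro g
      conv_lhs => rw [hE]
      exact Finset.sum_powerset_insert hkE g
    rw [hsort]
    simp only [List.foldr_cons, map_sub, map_zsmul, zsmul_eq_mul, Int.cast_id]
    rw [ih _ hcard p, ih _ hcard k, hsplit]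
    have hcongr : ∀ S ∈ (F.erase k).powerset,
        (-1 : ℤ) ^ (insert k S).card *
            chainProd (fun p q => c p (b q)) (p :: (insert k S).sort (· ≤ ·) ++ [j])
        = -(c p (b k) * ((-1 : ℤ) ^ S.card *
            chainProd (fun p q => c p (b q)) (k :: S.sort (· ≤ ·) ++ [j]))) := by
      intro S hS
      have hS' := Finset.mem_powerset.mp hS
      have hkS : k ∉ S := fun h => hkE (hS' h)
      have hins : (insert k S).sort (· ≤ ·) = k :: S.sort (· ≤ ·) :=
        Finset.sort_insert _ (fun m hm => (hlt m (hS' hm)).le) hkS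
      rw [hins, Finset.card_insert_of_notMem hkS]
      have : (p :: (k :: S.sort (· ≤ ·)) ++ [j])
          = p :: k :: (S.sort (· ≤ ·) ++ [j]) := by simp
      rw [this]
      simp only [List.cons_append, chainProd_cons, pow_succ]
      ring
    rw [Finset.sum_congr rfl hcongr]
    rw [Finset.sum_neg_distrib, ← Finset.mul_sum]
    ring

/-- Step 2 of Lemma 2: the reflection-theoretic invariant
`α_{ij}^ε = ⟨β_i^∨, (∏_{i<k<j, ε_k = -} s_{β_k})(β_j)⟩` (reflections applied with the
smallest index leftmost) equals the combinatorial chain sum. -/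
theorem stmt1 (N : ℕ) (hN : 1 ≤ N) {V : Type*} [AddCommGroup V] [Module ℤ V]
    (b : ℕ → V) (c : ℕ → V →ₗ[ℤ] ℤ)
    (hdiag : ∀ i < N, c i (b i) = 2)
    (hoff : ∀ i < N, ∀ j < N, b i ≠ b j → c i (b j) ≤ 0)
    (hsym : ∀ i < N, ∀ j < N, c i (b j) = 0 → c j (b i) = 0)
    (ε : ℕ → Bool) (i j : ℕ) (hij : i < j) (hj : j < N) :
    c i ((((Finset.Ioo i j).filter fun k => ε k = false).sort (· ≤ ·)).foldr
        (fun k v => v - c k v • b k) (b j))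
      = alphaC (fun p q => c p (b q)) ε i j := by
  unfold alphaC
  exact key b c j _ _ rfl i
end

section
/- With notation as above (integers a_1,…,a_N, matrix (β_{ij}), vectors x^ε defined by x^ε_i = -a_i if ε_i=+ and x^ε_i = -∑_{j>i} β_{ij} x^ε_j if ε_i=-, and linear forms φ_m(e_i^+) := m_i + a_i, φ_m(e_i^-) := -m_i - ∑_{j>i} β_{ij} m_j for m ∈ ℤ^N): for every ε ∈ {+,-}^N and every i, if ε_i = + then φ_{x^ε}(e_i^+) = 0 and φ_{x^ε}(e_i^-) = a_i + ∑_{j>i, ε_j=+} α_{ij}^ε a_j, while if ε_i = - then φ_{x^ε}(e_i^-) = 0 and φ_{x^ε}(e_i^+) = a_i + ∑_{j>i, ε_j=+} α_{ij}^{ε'} a_j where ε' agrees with ε except ε'_i = +. -/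
open Finset

lemma alphaC_congr (β : ℕ → ℕ → ℤ) {ε ε' : ℕ → Bool} {i j : ℕ}
    (h : ∀ k ∈ Finset.Ioo i j, ε k = ε' k) : alphaC β ε i j = alphaC β ε' i j := by
  unfold alphaC
  have hf : (Finset.Ioo i j).filter (fun k => ε k = false)
      = (Finset.Ioo i j).filter (fun k => ε' k = false) :=
    Finset.filter_congr (fun k hk => by simp [h k hk])
  rw [hf]

lemma alphaC_rec (β : ℕ → ℕ → ℤ) (ε : ℕ → Bool) {i k : ℕ} (hik : i < k) :
    alphaC β ε i k = β i k -
      ∑ j ∈ (Finset.Ioo i k).filter (fun j => ε j = false), β i j * alphaC β ε j k := by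
  conv_lhs => rw [alphaC]
  set T := (Finset.Ioo i k).filter (fun j => ε j = false) with hT
  have h0 : (∅ : Finset ℕ) ∈ T.powerset := Finset.empty_mem_powerset T
  rw [← Finset.sum_erase_add _ _ h0]
  have hemp : ((-1:ℤ)^(∅:Finset ℕ).card *
      chainProd β (i :: Finset.sort (∅:Finset ℕ) (· ≤ ·) ++ [k])) = β i k := by
    simp [chainProd]
  rw [hemp]
  have hbij : ∑ S ∈ T.powerset.erase ∅,
      (-1:ℤ)^S.card * chainProd β (i :: Finset.sort S (· ≤ ·) ++ [k])
      = ∑ p ∈ T.sigma (fun j => ((Finset.Ioo j k).filter (fun l => ε l = false)).powerset),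
          -(β i p.1 * ((-1:ℤ)^p.2.card * chainProd β (p.1 :: Finset.sort p.2 (· ≤ ·) ++ [k]))) := by
    apply Finset.sum_bij'
      (i := fun S hS => (⟨S.min' (Finset.nonempty_iff_ne_empty.mpr (Finset.mem_erase.mp hS).1),
        S.erase (S.min' (Finset.nonempty_iff_ne_empty.mpr (Finset.mem_erase.mp hS).1))⟩ :
        Σ _ : ℕ, Finset ℕ))
      (j := fun p _ => insert p.1 p.2)
    case hi =>
      intro S hS
      obtain ⟨hne, hsub⟩ := Finset.mem_erase.mp hS
      have hsub' := Finset.mem_powerset.mp hsub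
      have hSne : S.Nonempty := Finset.nonempty_iff_ne_empty.mpr hne
      have hmS : S.min' hSne ∈ S := Finset.min'_mem _ _
      rw [Finset.mem_sigma]
      constructor
      · exact hsub' hmS
      · rw [Finset.mem_powerset]
        intro b hb
        obtain ⟨hbm, hbS⟩ := Finset.mem_erase.mp hb
        have hbT := hsub' hbS
        rw [hT, Finset.mem_filter, Finset.mem_Ioo] at hbT
        have hle : S.min' hSne ≤ b := Finset.min'_le _ _ hbS
        rw [Finset.mem_filter, Finset.mem_Ioo]
        exact ⟨⟨lt_of_le_of_ne hle (Ne.symm hbm), hbT.1.2⟩, hbT.2⟩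
    case hj =>
      intro p hp
      rw [Finset.mem_sigma] at hp
      rw [Finset.mem_erase]
      refine ⟨Finset.insert_ne_empty _ _, Finset.mem_powerset.mpr ?_⟩
      intro b hb
      rcases Finset.mem_insert.mp hb with rfl | hb'
      · exact hp.1
      · have hbm := Finset.mem_powerset.mp hp.2 hb'
        rw [Finset.mem_filter, Finset.mem_Ioo] at hbm
        have hp1 := hp.1
        rw [hT, Finset.mem_filter, Finset.mem_Ioo] at hp1 ⊢
        exact ⟨⟨by omega, hbm.1.2⟩, hbm.2⟩
    case left_neg =>
      intro S hS
      exact Finset.insert_erase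
        (Finset.min'_mem _ (Finset.nonempty_iff_ne_empty.mpr (Finset.mem_erase.mp hS).1))
    case right_neg =>
      intro p hp
      rw [Finset.mem_sigma] at hp
      have hlt : ∀ b ∈ p.2, p.1 < b := by
        intro b hb
        have hbm := Finset.mem_powerset.mp hp.2 hb
        rw [Finset.mem_filter, Finset.mem_Ioo] at hbm
        exact hbm.1.1
      have hnotmem : p.1 ∉ p.2 := fun h => lt_irrefl _ (hlt _ h)
      have hne : (insert p.1 p.2).Nonempty := Finset.insert_nonempty _ _
      have hmin : ∀ hh, (insert p.1 p.2).min' hh = p.1 := by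
        intro hh
        apply le_antisymm
        · exact Finset.min'_le _ _ (Finset.mem_insert_self _ _)
        · apply Finset.le_min'
          intro y hy
          rcases Finset.mem_insert.mp hy with rfl | hy'
          · exact le_refl _
          · exact le_of_lt (hlt _ hy')
      refine Sigma.ext (hmin hne) (heq_of_eq ?_)
      dsimp only
      rw [hmin, Finset.erase_insert hnotmem]
    case h =>
      intro S hS
      dsimp only
      obtain ⟨hne, hsub⟩ := Finset.mem_erase.mp hS
      have hSne : S.Nonempty := Finset.nonempty_iff_ne_empty.mpr hne
      have hmS : S.min' hSne ∈ S := Finset.min'_mem _ _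
      set m := S.min' hSne with hm
      have hsort : Finset.sort S (· ≤ ·) = m :: Finset.sort (S.erase m) (· ≤ ·) := by
        conv_lhs => rw [← Finset.insert_erase hmS]
        apply Finset.sort_insert
        · intro b hb
          exact Finset.min'_le _ _ (Finset.mem_erase.mp hb).2
        · exact Finset.notMem_erase _ _
      have hcard : S.card = (S.erase m).card + 1 := by
        rw [Finset.card_erase_of_mem hmS]
        have : 1 ≤ S.card := Finset.card_pos.mpr hSne
        omega
      rw [hsort, hcard]
      show (-1:ℤ)^((S.erase m).card + 1)
          * chainProd β (i :: m :: (Finset.sort (S.erase m) (· ≤ ·) ++ [k]))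
        = -(β i m * ((-1:ℤ)^(S.erase m).card
          * chainProd β (m :: Finset.sort (S.erase m) (· ≤ ·) ++ [k])))
      rw [show chainProd β (i :: m :: (Finset.sort (S.erase m) (· ≤ ·) ++ [k]))
        = β i m * chainProd β (m :: (Finset.sort (S.erase m) (· ≤ ·) ++ [k])) from rfl]
      rw [show (m :: Finset.sort (S.erase m) (· ≤ ·) ++ [k])
        = (m :: (Finset.sort (S.erase m) (· ≤ ·) ++ [k])) from rfl]
      ring
  rw [hbij, Finset.sum_sigma]
  have hin : ∀ j ∈ T, (∑ S' ∈ ((Finset.Ioo j k).filter (fun l => ε l = false)).powerset,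
      -(β i j * ((-1:ℤ)^S'.card * chainProd β (j :: Finset.sort S' (· ≤ ·) ++ [k]))))
      = -(β i j * alphaC β ε j k) := by
    intro j _
    rw [alphaC, Finset.mul_sum, Finset.sum_neg_distrib]
  rw [Finset.sum_congr rfl hin, Finset.sum_neg_distrib]
  ring


lemma swapLem (N : ℕ) (β : ℕ → ℕ → ℤ) (a : ℕ → ℤ) (ε : ℕ → Bool) (i : ℕ) :
    ∑ l ∈ (Finset.Ioo i N).filter (fun l => ε l = false),
      β i l * ∑ k ∈ (Finset.Ioo l N).filter (fun k => ε k = true), alphaC β ε l k * a k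
    = ∑ j ∈ (Finset.Ioo i N).filter (fun j => ε j = true),
        (∑ l ∈ (Finset.Ioo i j).filter (fun l => ε l = false), β i l * alphaC β ε l j) * a j := by
  have canonical : ∀ (q : ℕ → ℕ → Prop) [DecidablePred fun p : ℕ × ℕ => q p.1 p.2], True := fun _ _ => trivial
  have hL : (∑ l ∈ (Finset.Ioo i N).filter (fun l => ε l = false),
      β i l * ∑ k ∈ (Finset.Ioo l N).filter (fun k => ε k = true), alphaC β ε l k * a k)
      = ∑ l ∈ Finset.Ioo i N, ∑ k ∈ Finset.Ioo i N,
          if ε l = false ∧ ε k = true ∧ l < k then β i l * alphaC β ε l k * a k else 0 := by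
    rw [Finset.sum_filter]
    apply Finset.sum_congr rfl
    intro l hl
    rw [Finset.mem_Ioo] at hl
    by_cases hεl : ε l = false
    · rw [if_pos hεl]
      have hset : (Finset.Ioo l N).filter (fun k => ε k = true)
          = (Finset.Ioo i N).filter (fun k => ε k = true ∧ l < k) := by
        ext k
        simp only [Finset.mem_filter, Finset.mem_Ioo]
        constructor
        · rintro ⟨⟨h1, h2⟩, h3⟩
          exact ⟨⟨lt_trans hl.1 h1, h2⟩, h3, h1⟩
        · rintro ⟨⟨h1, h2⟩, h3, h4⟩
          exact ⟨⟨h4, h2⟩, h3⟩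
      rw [hset, Finset.sum_filter, Finset.mul_sum]
      apply Finset.sum_congr rfl
      intro k _
      by_cases hk : ε k = true ∧ l < k
      · rw [if_pos hk, if_pos ⟨hεl, hk⟩]; ring
      · rw [if_neg hk, if_neg (by tauto), mul_zero]
    · rw [if_neg hεl]
      symm
      apply Finset.sum_eq_zero
      intro k _
      rw [if_neg (by tauto)]
  have hR : (∑ j ∈ (Finset.Ioo i N).filter (fun j => ε j = true),
      (∑ l ∈ (Finset.Ioo i j).filter (fun l => ε l = false), β i l * alphaC β ε l j) * a j)
      = ∑ j ∈ Finset.Ioo i N, ∑ l ∈ Finset.Ioo i N,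
          if ε l = false ∧ ε j = true ∧ l < j then β i l * alphaC β ε l j * a j else 0 := by
    rw [Finset.sum_filter]
    apply Finset.sum_congr rfl
    intro j hj
    rw [Finset.mem_Ioo] at hj
    by_cases hεj : ε j = true
    · rw [if_pos hεj]
      have hset : (Finset.Ioo i j).filter (fun l => ε l = false)
          = (Finset.Ioo i N).filter (fun l => ε l = false ∧ l < j) := by
        ext l
        simp only [Finset.mem_filter, Finset.mem_Ioo]
        constructor
        · rintro ⟨⟨h1, h2⟩, h3⟩
          exact ⟨⟨h1, lt_trans h2 hj.2⟩, h3, h2⟩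
        · rintro ⟨⟨h1, h2⟩, h3, h4⟩
          exact ⟨⟨h1, h4⟩, h3⟩
      rw [hset, Finset.sum_filter, Finset.sum_mul]
      apply Finset.sum_congr rfl
      intro l _
      by_cases hk : ε l = false ∧ l < j
      · rw [if_pos hk, if_pos ⟨hk.1, hεj, hk.2⟩]
      · rw [if_neg hk, if_neg (by tauto), zero_mul]
    · rw [if_neg hεj]
      symm
      apply Finset.sum_eq_zero
      intro l _
      rw [if_neg (by tauto)]
  rw [hL, hR, Finset.sum_comm]

lemma keyLem (N : ℕ) (β : ℕ → ℕ → ℤ) (a : ℕ → ℤ) (x : (ℕ → Bool) → ℕ → ℤ)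
    (hx : IsBSx N β a x) (ε : ℕ → Bool) :
    ∀ n, ∀ i, i < N → N - i ≤ n →
      (-∑ j ∈ Finset.Ioo i N, β i j * x ε j)
        = ∑ j ∈ (Finset.Ioo i N).filter (fun j => ε j = true), alphaC β ε i j * a j := by
  intro n
  induction n with
  | zero => intro i hi h; omega
  | succ n ih =>
    intro i hi _hle
    have hxj : ∀ j ∈ Finset.Ioo i N, x ε j =
        (if ε j = true then -a j
         else ∑ k ∈ (Finset.Ioo j N).filter (fun k => ε k = true), alphaC β ε j k * a k) := by
      intro j hj
      rw [Finset.mem_Ioo] at hj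
      by_cases hεj : ε j = true
      · rw [if_pos hεj]; exact (hx ε j hj.2).1 hεj
      · rw [if_neg hεj]
        rw [(hx ε j hj.2).2 (by simpa using hεj)]
        exact ih j hj.2 (by omega)
    rw [Finset.sum_congr rfl (fun j hj => by rw [hxj j hj])]
    rw [← Finset.sum_filter_add_sum_filter_not (Finset.Ioo i N) (fun j => ε j = true)]
    have h1 : ∑ j ∈ (Finset.Ioo i N).filter (fun j => ε j = true),
        β i j * (if ε j = true then -a j
          else ∑ k ∈ (Finset.Ioo j N).filter (fun k => ε k = true), alphaC β ε j k * a k)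
        = ∑ j ∈ (Finset.Ioo i N).filter (fun j => ε j = true), -(β i j * a j) := by
      apply Finset.sum_congr rfl
      intro j hj
      rw [if_pos (Finset.mem_filter.mp hj).2]; ring
    have h2 : ∑ j ∈ (Finset.Ioo i N).filter (fun j => ¬ε j = true),
        β i j * (if ε j = true then -a j
          else ∑ k ∈ (Finset.Ioo j N).filter (fun k => ε k = true), alphaC β ε j k * a k)
        = ∑ l ∈ (Finset.Ioo i N).filter (fun l => ε l = false),
            β i l * ∑ k ∈ (Finset.Ioo l N).filter (fun k => ε k = true), alphaC β ε l k * a k := by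
      rw [Finset.filter_congr (fun l _ => by simp : ∀ l ∈ Finset.Ioo i N, (¬ε l = true) ↔ (ε l = false))]
      apply Finset.sum_congr rfl
      intro j hj
      rw [if_neg (by simpa using (Finset.mem_filter.mp hj).2)]
    rw [h1, h2, swapLem N β a ε i]
    have h3 : ∀ j ∈ (Finset.Ioo i N).filter (fun j => ε j = true),
        alphaC β ε i j * a j = β i j * a j
          - (∑ l ∈ (Finset.Ioo i j).filter (fun l => ε l = false), β i l * alphaC β ε l j) * a j := by
      intro j hj
      rw [Finset.mem_filter, Finset.mem_Ioo] at hj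
      rw [alphaC_rec β ε hj.1.1]; ring
    rw [Finset.sum_congr rfl h3, Finset.sum_sub_distrib, Finset.sum_neg_distrib]
    ring

/-- Lemma 2: values of `φ_{x^ε}` on the rays. If `ε_i = +` then `φ_{x^ε}(e_i^+) = 0`
and `φ_{x^ε}(e_i^-) = C_i^ε`; if `ε_i = -` then `φ_{x^ε}(e_i^-) = 0` and
`φ_{x^ε}(e_i^+) = C_i^{ε'}` where `ε'` flips the `i`-th sign to `+`. -/
theorem stmt2 (N : ℕ) (hN : 1 ≤ N) (β : ℕ → ℕ → ℤ) (a : ℕ → ℤ)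
    (x : (ℕ → Bool) → ℕ → ℤ) (hx : IsBSx N β a x)
    (ε : ℕ → Bool) (i : ℕ) (hi : i < N) :
    (ε i = true →
      phiP a (x ε) i = 0 ∧ phiM N β (x ε) i = Cc N β a ε i) ∧
    (ε i = false →
      phiM N β (x ε) i = 0 ∧
        phiP a (x ε) i = Cc N β a (Function.update ε i true) i) := by
  have hk := keyLem N β a x hx ε N i hi (by omega)
  constructor
  · intro h
    have hxi := (hx ε i hi).1 h
    constructor
    · simp [phiP, hxi]
    · unfold phiM Cc
      rw [← hk, hxi]; ring
  · intro h
    have hxi := (hx ε i hi).2 h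
    have hCc : Cc N β a (Function.update ε i true) i = Cc N β a ε i := by
      unfold Cc
      congr 1
      have hflt : (Finset.Ioo i N).filter (fun j => Function.update ε i true j = true)
          = (Finset.Ioo i N).filter (fun j => ε j = true) := by
        apply Finset.filter_congr
        intro j hj
        rw [Finset.mem_Ioo] at hj
        rw [Function.update_of_ne (by omega)]
      rw [hflt]
      apply Finset.sum_congr rfl
      intro j hj
      rw [Finset.mem_filter, Finset.mem_Ioo] at hj
      congr 1
      apply alphaC_congr
      intro l hl
      rw [Finset.mem_Ioo] at hl
      rw [Function.update_of_ne (by omega)]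
    constructor
    · unfold phiM; rw [hxi]; ring
    · unfold phiP
      rw [hxi, hCc]
      unfold Cc
      rw [← hk]; ring
end

section
/- Let N ≥ 1, (β_{ij}) an integer matrix, a ∈ ℤ^N, and define e_i^+ the standard basis of ℝ^N, e_i^- := -e_i^+ - ∑_{j>i} β_{ij} e_j^+, and for m ∈ ℝ^N set φ_m(e_i^+) := m_i + a_i and φ_m(e_i^-) := -m_i - ∑_{j>i} β_{ij} m_j. Suppose m ∈ ℤ^N is such that for every i ∈ {1,…,N}, the two numbers φ_m(e_i^+) and φ_m(e_i^-) are either both ≥ 0 or both < 0. Then m lies in the convex hull (in ℝ^N) of the finite set {x^ε : ε ∈ {+,-}^N}, where x^ε is defined by x^ε_i = -a_i if ε_i = + and x^ε_i = -∑_{j>i} β_{ij} x^ε_j if ε_i = -. -/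
open Finset

lemma bs_indep (N : ℕ) (β : ℕ → ℕ → ℤ) (a : ℕ → ℤ) (x : (ℕ → Bool) → ℕ → ℤ)
    (hx : IsBSx N β a x) :
    ∀ d i, i < N → N - i ≤ d → ∀ ε ε' : ℕ → Bool, (∀ j, i ≤ j → ε j = ε' j) →
      x ε i = x ε' i := by
  intro d
  induction d with
  | zero => intro i hi hd; omega
  | succ d ih =>
    intro i hi hd ε ε' hagree
    have hii := hagree i le_rfl
    cases h : ε i with
    | true =>
      rw [(hx ε i hi).1 h, (hx ε' i hi).1 (by rw [← hii]; exact h)]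
    | false =>
      rw [(hx ε i hi).2 h, (hx ε' i hi).2 (by rw [← hii]; exact h)]
      congr 1
      apply Finset.sum_congr rfl
      intro j hj
      rw [Finset.mem_Ioo] at hj
      rw [ih j hj.2 (by omega) ε ε' (fun k hk => hagree k (le_trans (le_of_lt hj.1) hk))]

lemma Wsplit (lam : ℕ → ℝ) (a : ℕ) (s : Finset ℕ) (ha : a ∉ s) (f : Finset ℕ → ℝ) :
    ∑ T ∈ (insert a s).powerset,
        (∏ k ∈ insert a s, if k ∈ T then lam k else 1 - lam k) * f T
      = (1 - lam a) * ∑ T ∈ s.powerset,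
          (∏ k ∈ s, if k ∈ T then lam k else 1 - lam k) * f T
        + lam a * ∑ T ∈ s.powerset,
          (∏ k ∈ s, if k ∈ T then lam k else 1 - lam k) * f (insert a T) := by
  rw [Finset.sum_powerset_insert ha, Finset.mul_sum, Finset.mul_sum]
  congr 1
  · apply Finset.sum_congr rfl
    intro T hT
    have haT : a ∉ T := fun h => ha (Finset.mem_powerset.1 hT h)
    rw [Finset.prod_insert ha, if_neg haT, mul_assoc]
  · apply Finset.sum_congr rfl
    intro T hT
    rw [Finset.prod_insert ha, if_pos (Finset.mem_insert_self a T), mul_assoc]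
    congr 2
    apply Finset.prod_congr rfl
    intro k hk
    have hka : k ≠ a := fun h => ha (h ▸ hk)
    simp [Finset.mem_insert, hka]

lemma Wsum (lam : ℕ → ℝ) (s : Finset ℕ) :
    ∑ T ∈ s.powerset, ∏ k ∈ s, (if k ∈ T then lam k else 1 - lam k) = 1 := by
  induction s using Finset.induction_on with
  | empty => simp
  | insert _ _ ha ih =>
    have h := Wsplit lam _ _ ha (fun _ => (1:ℝ))
    simp only [mul_one] at h
    rw [h, ih]
    ring

lemma mainE (N : ℕ) (β : ℕ → ℕ → ℤ) (a : ℕ → ℤ) (x : (ℕ → Bool) → ℕ → ℤ)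
    (hx : IsBSx N β a x) (m : ℕ → ℤ) (lam : ℕ → ℝ)
    (hlam : ∀ i < N, (m i : ℝ) =
      lam i * (-(a i : ℝ)) + (1 - lam i) * (-(∑ j ∈ Finset.Ioo i N, (β i j : ℝ) * (m j : ℝ)))) :
    ∀ d i, i < N → N - i ≤ d →
      ∑ S ∈ (Finset.range N).powerset, wt N lam S * (x (epsOf S) i : ℝ) = (m i : ℝ) := by
  intro d
  induction d with
  | zero => intro i hi hd; omega
  | succ d ih =>
    intro i hi hd
    set E := (Finset.range N).erase i with hE
    have hiE : i ∉ E := Finset.notMem_erase i _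
    have hins : insert i E = Finset.range N := Finset.insert_erase (Finset.mem_range.2 hi)
    have key : ∀ f : Finset ℕ → ℝ,
        ∑ S ∈ (Finset.range N).powerset, wt N lam S * f S
          = (1 - lam i) * ∑ T ∈ E.powerset,
              (∏ k ∈ E, if k ∈ T then lam k else 1 - lam k) * f T
            + lam i * ∑ T ∈ E.powerset,
              (∏ k ∈ E, if k ∈ T then lam k else 1 - lam k) * f (insert i T) := by
      intro f
      have h := Wsplit lam i E hiE f
      rw [hins] at h
      simpa [wt] using h
    have hPsum : ∑ T ∈ E.powerset, (∏ k ∈ E, if k ∈ T then lam k else 1 - lam k) = 1 :=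
      Wsum lam E
    -- the conditioned expectations of later coordinates
    have hxval : ∀ j, i < j → j < N →
        ∑ T ∈ E.powerset, (∏ k ∈ E, if k ∈ T then lam k else 1 - lam k) * (x (epsOf T) j : ℝ)
          = (m j : ℝ) := by
      intro j hij hjN
      have hmj := ih j hjN (by omega)
      rw [key (fun S => (x (epsOf S) j : ℝ))] at hmj
      have heq : ∀ T ∈ E.powerset,
          ((x (epsOf (insert i T)) j : ℝ)) = (x (epsOf T) j : ℝ) := by
        intro T hT
        have : x (epsOf (insert i T)) j = x (epsOf T) j := by
          apply bs_indep N β a x hx N j hjN (Nat.sub_le _ _)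
          intro k hk
          have hki : k ≠ i := by omega
          simp [epsOf, Finset.mem_insert, hki]
        exact_mod_cast congrArg (fun z : ℤ => (z : ℝ)) this
      have h2 : ∑ T ∈ E.powerset,
          (∏ k ∈ E, if k ∈ T then lam k else 1 - lam k) * (x (epsOf (insert i T)) j : ℝ)
          = ∑ T ∈ E.powerset,
          (∏ k ∈ E, if k ∈ T then lam k else 1 - lam k) * (x (epsOf T) j : ℝ) :=
        Finset.sum_congr rfl (fun T hT => by rw [heq T hT])
      rw [h2] at hmj
      linear_combination hmj
    rw [key (fun S => (x (epsOf S) i : ℝ))]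
    have hA : ∑ T ∈ E.powerset,
        (∏ k ∈ E, if k ∈ T then lam k else 1 - lam k) * (x (epsOf (insert i T)) i : ℝ)
        = -(a i : ℝ) := by
      have hv : ∀ T ∈ E.powerset, (x (epsOf (insert i T)) i : ℝ) = -(a i : ℝ) := by
        intro T hT
        have ht : epsOf (insert i T) i = true := by simp [epsOf]
        have := (hx (epsOf (insert i T)) i hi).1 ht
        rw [this]; push_cast; ring
      rw [Finset.sum_congr rfl (fun T hT => by rw [hv T hT]), ← Finset.sum_mul, hPsum, one_mul]
    have hB : ∑ T ∈ E.powerset,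
        (∏ k ∈ E, if k ∈ T then lam k else 1 - lam k) * (x (epsOf T) i : ℝ)
        = -(∑ j ∈ Finset.Ioo i N, (β i j : ℝ) * (m j : ℝ)) := by
      have hv : ∀ T ∈ E.powerset, (x (epsOf T) i : ℝ)
          = -(∑ j ∈ Finset.Ioo i N, (β i j : ℝ) * (x (epsOf T) j : ℝ)) := by
        intro T hT
        have hiT : i ∉ T := fun h => hiE (Finset.mem_powerset.1 hT h)
        have h0 : epsOf T i = false := by simp [epsOf, hiT]
        have := (hx (epsOf T) i hi).2 h0
        rw [this]; push_cast; ring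
      rw [Finset.sum_congr rfl (fun T hT => by rw [hv T hT])]
      have hsw : ∑ T ∈ E.powerset,
          (∏ k ∈ E, if k ∈ T then lam k else 1 - lam k)
            * (-(∑ j ∈ Finset.Ioo i N, (β i j : ℝ) * (x (epsOf T) j : ℝ)))
          = ∑ T ∈ E.powerset, ∑ j ∈ Finset.Ioo i N,
              -((β i j : ℝ) * ((∏ k ∈ E, if k ∈ T then lam k else 1 - lam k) * (x (epsOf T) j : ℝ))) := by
        apply Finset.sum_congr rfl
        intro T hT
        rw [mul_neg, Finset.mul_sum, ← Finset.sum_neg_distrib]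
        apply Finset.sum_congr rfl
        intro j hj
        ring
      rw [hsw, Finset.sum_comm]
      rw [← Finset.sum_neg_distrib]
      apply Finset.sum_congr rfl
      intro j hj
      rw [Finset.mem_Ioo] at hj
      rw [← hxval j hj.1 hj.2, Finset.mul_sum, ← Finset.sum_neg_distrib]
    rw [hA, hB]
    linear_combination -(hlam i hi)

/-- Lemma 1 (convex hull lemma): if for every `i` the numbers `φ_m(e_i^+)` and `φ_m(e_i^-)`
are both `≥ 0` or both `< 0`, then `m` lies in the convex hull of the points `x^ε`. -/
theorem stmt3 (N : ℕ) (hN : 1 ≤ N) (β : ℕ → ℕ → ℤ) (a : ℕ → ℤ)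
    (x : (ℕ → Bool) → ℕ → ℤ) (hx : IsBSx N β a x)
    (m : ℕ → ℤ)
    (hm : ∀ i < N, (0 ≤ phiP a m i ∧ 0 ≤ phiM N β m i) ∨
      (phiP a m i < 0 ∧ phiM N β m i < 0)) :
    (fun i : Fin N => (m i : ℝ)) ∈
      convexHull ℝ {v : Fin N → ℝ | ∃ ε : ℕ → Bool, v = fun i : Fin N => (x ε i : ℝ)} := by
  classical
  set lam : ℕ → ℝ := fun i =>
    if phiP a m i + phiM N β m i = 0 then 0
    else (phiM N β m i : ℝ) / ((phiP a m i : ℝ) + (phiM N β m i : ℝ)) with hlamdef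
  have hbound : ∀ i < N, 0 ≤ lam i ∧ lam i ≤ 1 := by
    intro i hi
    simp only [hlamdef]
    split_ifs with h
    · norm_num
    · have h' : ((phiP a m i : ℝ) + (phiM N β m i : ℝ)) ≠ 0 := by
        intro hc
        apply h
        exact_mod_cast (by push_cast at hc ⊢; linarith : ((phiP a m i + phiM N β m i : ℤ) : ℝ) = 0)
      rcases hm i hi with ⟨h1, h2⟩ | ⟨h1, h2⟩
      · have h1' : (0:ℝ) ≤ (phiP a m i : ℝ) := by exact_mod_cast h1
        have h2' : (0:ℝ) ≤ (phiM N β m i : ℝ) := by exact_mod_cast h2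
        have hpos : (0:ℝ) < (phiP a m i : ℝ) + (phiM N β m i : ℝ) :=
          lt_of_le_of_ne (by linarith) (Ne.symm h')
        constructor
        · positivity
        · rw [div_le_one hpos]; linarith
      · have h1' : (phiP a m i : ℝ) < 0 := by exact_mod_cast h1
        have h2' : (phiM N β m i : ℝ) < 0 := by exact_mod_cast h2
        have hneg : (phiP a m i : ℝ) + (phiM N β m i : ℝ) < 0 := by linarith
        have hfr : (0:ℝ) < (phiP a m i : ℝ) / ((phiP a m i : ℝ) + (phiM N β m i : ℝ)) :=
          div_pos_of_neg_of_neg h1' hneg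
        have hsplit : (phiM N β m i : ℝ) / ((phiP a m i : ℝ) + (phiM N β m i : ℝ))
            = 1 - (phiP a m i : ℝ) / ((phiP a m i : ℝ) + (phiM N β m i : ℝ)) := by
          field_simp
          ring
        constructor
        · exact le_of_lt (div_pos_of_neg_of_neg h2' hneg)
        · rw [hsplit]; linarith
  have hkey : ∀ i < N, (phiM N β m i : ℝ) = lam i * ((phiP a m i : ℝ) + (phiM N β m i : ℝ)) := by
    intro i hi
    simp only [hlamdef]
    split_ifs with h
    · have : phiM N β m i = 0 := by
        rcases hm i hi with ⟨h1, h2⟩ | ⟨h1, h2⟩ <;> omega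
      rw [this]; norm_num
    · have h' : ((phiP a m i : ℝ) + (phiM N β m i : ℝ)) ≠ 0 := by
        intro hc
        apply h
        exact_mod_cast (by push_cast at hc ⊢; linarith : ((phiP a m i + phiM N β m i : ℤ) : ℝ) = 0)
      field_simp
  have hlam : ∀ i < N, (m i : ℝ) =
      lam i * (-(a i : ℝ)) + (1 - lam i) * (-(∑ j ∈ Finset.Ioo i N, (β i j : ℝ) * (m j : ℝ))) := by
    intro i hi
    have hP : ((phiP a m i : ℤ) : ℝ) = (m i : ℝ) + (a i : ℝ) := by
      simp only [phiP]; push_cast; ring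
    have hQ : ((phiM N β m i : ℤ) : ℝ)
        = -(m i : ℝ) - ∑ j ∈ Finset.Ioo i N, (β i j : ℝ) * (m j : ℝ) := by
      simp only [phiM]; push_cast; ring
    linear_combination (-1:ℝ) * (hkey i hi) + (1 - lam i) * hQ - lam i * hP
  have hwt0 : ∀ S ∈ (Finset.range N).powerset, 0 ≤ wt N lam S := by
    intro S _
    apply Finset.prod_nonneg
    intro k hk
    rcases hbound k (Finset.mem_range.1 hk) with ⟨hb0, hb1⟩
    split_ifs <;> linarith
  have hwt1 : ∑ S ∈ (Finset.range N).powerset, wt N lam S = 1 := by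
    simpa [wt] using Wsum lam (Finset.range N)
  have hE := mainE N β a x hx m lam hlam N
  have hmem : ∀ S ∈ (Finset.range N).powerset,
      (fun i : Fin N => (x (epsOf S) i : ℝ)) ∈
        {v : Fin N → ℝ | ∃ ε : ℕ → Bool, v = fun i : Fin N => (x ε i : ℝ)} :=
    fun S _ => ⟨epsOf S, rfl⟩
  have hcm := Finset.centerMass_mem_convexHull (t := (Finset.range N).powerset)
    (w := wt N lam) (z := fun S => fun i : Fin N => (x (epsOf S) i : ℝ)) hwt0
    (by rw [hwt1]; norm_num) hmem
  have heq : (Finset.range N).powerset.centerMass (wt N lam)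
      (fun S => fun i : Fin N => (x (epsOf S) i : ℝ)) = fun i : Fin N => (m i : ℝ) := by
    rw [Finset.centerMass_eq_of_sum_1 _ _ hwt1]
    funext i
    rw [Finset.sum_apply]
    simp only [Pi.smul_apply, smul_eq_mul]
    exact hE i.1 i.2 (Nat.sub_le _ _)
  rw [← heq]
  exact hcm
end

section
/- Let λ_1,…,λ_N ∈ [0,1], m^ε := ∏_{i: ε_i=+} λ_i ∏_{i: ε_i=-} (1-λ_i), and let x^ε ∈ ℝ^N be defined by x^ε_i = -a_i if ε_i=+ and x^ε_i = -∑_{j>i} β_{ij} x^ε_j if ε_i=-. Define m ∈ ℝ^N by downward recursion m_i := -λ_i a_i - (1-λ_i) ∑_{j>i} β_{ij} m_j. Then m = ∑_{ε ∈ {+,-}^N} m^ε x^ε. -/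
open Finset

/-- The explicit convex-combination computation: if `m_i = -λ_i a_i - (1-λ_i) ∑_{j>i} β_{ij} m_j`
then `m = ∑_ε m^ε x^ε`. -/
theorem stmt7 (N : ℕ) (hN : 1 ≤ N) (β : ℕ → ℕ → ℝ) (a : ℕ → ℝ)
    (x : (ℕ → Bool) → ℕ → ℝ)
    (hx : ∀ ε : ℕ → Bool, ∀ i < N,
      (ε i = true → x ε i = -a i) ∧
      (ε i = false → x ε i = -∑ j ∈ Finset.Ioo i N, β i j * x ε j))
    (lam : ℕ → ℝ) (hlam : ∀ i < N, lam i ∈ Set.Icc (0 : ℝ) 1)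
    (m : ℕ → ℝ)
    (hm : ∀ i < N, m i = -lam i * a i - (1 - lam i) * ∑ j ∈ Finset.Ioo i N, β i j * m j) :
    ∀ i < N, m i = ∑ S ∈ (Finset.range N).powerset, wt N lam S * x (epsOf S) i := by

  -- `x ε i` depends only on the values of `ε` at indices `≥ i`.
  have xdep : ∀ d, ∀ i, N ≤ i + d → i < N → ∀ ε ε' : ℕ → Bool,
      (∀ k, i ≤ k → ε k = ε' k) → x ε i = x ε' i := by
    intro d
    induction d with
    | zero => intro i h1 h2; omega
    | succ d ih =>
      intro i h1 h2 ε ε' hagree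
      have he : ε i = ε' i := hagree i le_rfl
      cases hεi : ε i with
      | true =>
        rw [(hx ε i h2).1 hεi, (hx ε' i h2).1 (by rw [← he, hεi])]
      | false =>
        rw [(hx ε i h2).2 hεi, (hx ε' i h2).2 (by rw [← he, hεi])]
        congr 1
        refine Finset.sum_congr rfl fun j hj => ?_
        simp only [Finset.mem_Ioo] at hj
        rw [ih j (by omega) hj.2 ε ε' (fun k hk => hagree k (by omega))]
  suffices H : ∀ d, ∀ i, N ≤ i + d → i < N →
      m i = ∑ S ∈ (Finset.range N).powerset, wt N lam S * x (epsOf S) i by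
    intro i hi; exact H N i (by omega) hi
  intro d
  induction d with
  | zero => intro i h1 h2; omega
  | succ d ih =>
    intro i h1 hi
    set s : Finset ℕ := (Finset.range N).erase i with hs
    have hnis : i ∉ s := Finset.notMem_erase i _
    have hins : Finset.range N = insert i s := by
      rw [hs, Finset.insert_erase (Finset.mem_range.mpr hi)]
    have hwt1 : ∀ T ∈ s.powerset, wt N lam T
        = (1 - lam i) * ∏ k ∈ s, (if k ∈ T then lam k else 1 - lam k) := by
      intro T hT
      simp only [Finset.mem_powerset] at hT
      have hiT : i ∉ T := fun h => hnis (hT h)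
      rw [wt, hins, Finset.prod_insert hnis, if_neg hiT]
    have hwt2 : ∀ T ∈ s.powerset, wt N lam (insert i T)
        = lam i * ∏ k ∈ s, (if k ∈ T then lam k else 1 - lam k) := by
      intro T hT
      simp only [Finset.mem_powerset] at hT
      rw [wt, hins, Finset.prod_insert hnis, if_pos (Finset.mem_insert_self i T)]
      congr 1
      refine Finset.prod_congr rfl fun k hk => ?_
      have hki : k ≠ i := fun h => hnis (h ▸ hk)
      simp [Finset.mem_insert, hki]
    have hsum1 : ∑ T ∈ s.powerset, ∏ k ∈ s, (if k ∈ T then lam k else 1 - lam k) = 1 := by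
      have h1 : ∀ T ∈ s.powerset, (∏ k ∈ s, (if k ∈ T then lam k else 1 - lam k))
          = (∏ k ∈ T, lam k) * ∏ k ∈ s \ T, (1 - lam k) := by
        intro T hT
        simp only [Finset.mem_powerset] at hT
        rw [Finset.prod_ite]
        congr 1
        · congr 1
          rw [Finset.filter_mem_eq_inter, Finset.inter_eq_right.mpr hT]
        · congr 1
          rw [Finset.sdiff_eq_filter]
      rw [Finset.sum_congr rfl h1, ← Finset.prod_add]
      rw [Finset.prod_congr rfl (fun k _ => by ring : ∀ k ∈ s, lam k + (1 - lam k) = (1:ℝ)),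
        Finset.prod_const_one]
    have hmj : ∀ j ∈ Finset.Ioo i N,
        ∑ T ∈ s.powerset, (∏ k ∈ s, (if k ∈ T then lam k else 1 - lam k)) * x (epsOf T) j
          = m j := by
      intro j hj
      obtain ⟨hij, hjN⟩ := Finset.mem_Ioo.mp hj
      rw [ih j (by omega) hjN, hins, Finset.sum_powerset_insert hnis, ← Finset.sum_add_distrib]
      refine Finset.sum_congr rfl fun T hT => ?_
      have hx' : x (epsOf (insert i T)) j = x (epsOf T) j := by
        refine xdep N j (by omega) hjN _ _ fun k hk => ?_
        have hki : k ≠ i := by omega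
        simp [epsOf, Finset.mem_insert, hki]
      rw [hwt1 T hT, hwt2 T hT, hx']
      ring
    rw [hm i hi, hins, Finset.sum_powerset_insert hnis]
    have e1 : ∑ T ∈ s.powerset, wt N lam T * x (epsOf T) i
        = -((1 - lam i) * ∑ j ∈ Finset.Ioo i N, β i j * m j) := by
      have step : ∀ T ∈ s.powerset, wt N lam T * x (epsOf T) i
          = ∑ j ∈ Finset.Ioo i N,
              -((1 - lam i) * (β i j *
                ((∏ k ∈ s, (if k ∈ T then lam k else 1 - lam k)) * x (epsOf T) j))) := by
        intro T hT
        have hiT : epsOf T i = false := by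
          simp only [Finset.mem_powerset] at hT
          have : i ∉ T := fun h => hnis (hT h)
          simp [epsOf, this]
        rw [(hx (epsOf T) i hi).2 hiT, hwt1 T hT, mul_neg, Finset.mul_sum, ← Finset.sum_neg_distrib]
        exact Finset.sum_congr rfl fun j _ => by ring
      rw [Finset.sum_congr rfl step, Finset.sum_comm, Finset.mul_sum, ← Finset.sum_neg_distrib]
      refine Finset.sum_congr rfl fun j hj => ?_
      rw [← hmj j hj]
      rw [Finset.mul_sum, Finset.mul_sum, ← Finset.sum_neg_distrib]
    have e2 : ∑ T ∈ s.powerset, wt N lam (insert i T) * x (epsOf (insert i T)) i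
        = -(lam i * a i) := by
      have step : ∀ T ∈ s.powerset, wt N lam (insert i T) * x (epsOf (insert i T)) i
          = -(lam i * a i) * ∏ k ∈ s, (if k ∈ T then lam k else 1 - lam k) := by
        intro T hT
        have hεi : epsOf (insert i T) i = true := by simp [epsOf]
        rw [(hx _ i hi).1 hεi, hwt2 T hT]; ring
      rw [Finset.sum_congr rfl step, ← Finset.mul_sum, hsum1, mul_one]
    rw [e1, e2]
    ring
end

section
/- Fix a fan in ℤ^N whose maximal cones are the 2^N cones generated by {e_1^{ε_1},…,e_N^{ε_N}} for ε ∈ {+,-}^N, where e_i^+ is the standard basis and e_i^- := -e_i^+ - ∑_{j>i} β_{ij} e_j^+ for an integer matrix (β_{ij}). Then this collection of cones is indeed a complete fan: every cone generated by a subset of {e_1^±,…,e_N^±} not containing both e_i^+ and e_i^- for any i is a simplicial cone whose generators form part of a ℤ-basis (the fan is smooth), any two such cones intersect in a common face, and the union of all maximal cones is all of ℝ^N. -/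
open Finset

/-- `e_i^- = -e_i^+ - ∑_{j>i} β_{ij} e_j^+` in `ℤ^N`. -/
def eMinus (N : ℕ) (β : Fin N → Fin N → ℤ) (i : Fin N) : Fin N → ℤ :=
  -Pi.single i (1 : ℤ) -
    ∑ j ∈ Finset.univ.filter fun j : Fin N => i < j, β i j • Pi.single j (1 : ℤ)

/-- The generator `e_i^{ε_i}` of the Bott-tower fan. -/
def gen (N : ℕ) (β : Fin N → Fin N → ℤ) (ε : Fin N → Bool) (i : Fin N) : Fin N → ℤ :=
  if ε i then Pi.single i (1 : ℤ) else eMinus N β i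

/-- The real cone spanned by the generators `e_i^{ε_i}` for `i ∈ I`. -/
def coneOf (N : ℕ) (β : Fin N → Fin N → ℤ) (ε : Fin N → Bool) (I : Finset (Fin N)) :
    Set (Fin N → ℝ) :=
  {v | ∃ c : Fin N → ℝ, (∀ i, 0 ≤ c i) ∧ (∀ i ∉ I, c i = 0) ∧
    v = ∑ i, c i • fun k => ((gen N β ε i k : ℤ) : ℝ)}


lemma bt8_eMinus_apply {N : ℕ} (β : Fin N → Fin N → ℤ) (i k : Fin N) :
    eMinus N β i k = -(if k = i then 1 else 0) - (if i < k then β i k else 0) := by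
  unfold eMinus
  simp only [Pi.sub_apply, Pi.neg_apply, Pi.single_apply, Finset.sum_apply, Pi.smul_apply,
    smul_eq_mul]
  congr 1
  simp only [mul_ite, mul_one, mul_zero]
  rw [Finset.sum_ite_eq]
  simp

lemma bt8_gen_lt {N : ℕ} {β : Fin N → Fin N → ℤ} {ε : Fin N → Bool} {i k : Fin N} (h : k < i) :
    gen N β ε i k = 0 := by
  unfold gen
  split
  · simp [Pi.single_apply, h.ne]
  · rw [bt8_eMinus_apply, if_neg h.ne, if_neg (asymm h)]; ring

lemma bt8_gen_self {N : ℕ} {β : Fin N → Fin N → ℤ} {ε : Fin N → Bool} {i : Fin N} :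
    gen N β ε i i = if ε i then 1 else -1 := by
  unfold gen
  split <;> simp [bt8_eMinus_apply, Pi.single_apply]

lemma bt8_gen_gt {N : ℕ} {β : Fin N → Fin N → ℤ} {ε : Fin N → Bool} {i k : Fin N} (h : i < k) :
    gen N β ε i k = if ε i then 0 else -β i k := by
  unfold gen
  split
  · simp [Pi.single_apply, h.ne']
  · rw [bt8_eMinus_apply, if_neg h.ne', if_pos h]; ring

lemma bt8_sum_smul_apply {N : ℕ} (β : Fin N → Fin N → ℤ) (ε : Fin N → Bool) (c : Fin N → ℝ)
    (k : Fin N) :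
    (∑ i, c i • fun k => ((gen N β ε i k : ℤ) : ℝ)) k
      = (if ε k then c k else -c k)
        + ∑ j ∈ Finset.Iio k, (if ε j then 0 else -(β j k : ℝ)) * c j := by
  rw [Finset.sum_apply]
  simp only [Pi.smul_apply, smul_eq_mul]
  rw [← Finset.sum_subset (Finset.subset_univ (Finset.Iic k)) (by
    intro i _ hik
    rw [bt8_gen_lt (by simpa using hik), Int.cast_zero, mul_zero])]
  rw [← Finset.Iio_insert, Finset.sum_insert (by simp)]
  congr 1
  · rw [bt8_gen_self]; split <;> simp
  · refine Finset.sum_congr rfl fun j hj => ?_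
    rw [bt8_gen_gt (Finset.mem_Iio.mp hj)]
    split <;> simp [mul_comm]

open Classical in
noncomputable def bt8Rfun (N : ℕ) (β : Fin N → Fin N → ℤ) (v : Fin N → ℝ) : Fin N → ℝ × Bool
  | i =>
    let r : ℝ := v i - ∑ j ∈ (Finset.Iio i).attach,
      (if (bt8Rfun N β v j.1).2 then 0 else (β j.1 i : ℝ)) * (bt8Rfun N β v j.1).1
    (r, if 0 ≤ r then true else false)
  termination_by i => i.1
  decreasing_by exact Fin.lt_def.mp (Finset.mem_Iio.mp j.2)

open Classical in
lemma bt8Rfun_fst {N : ℕ} (β : Fin N → Fin N → ℤ) (v : Fin N → ℝ) (i : Fin N) :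
    (bt8Rfun N β v i).1 = v i - ∑ j ∈ Finset.Iio i,
      (if (bt8Rfun N β v j).2 then 0 else (β j i : ℝ)) * (bt8Rfun N β v j).1 := by
  rw [bt8Rfun]
  dsimp only
  congr 1
  exact Finset.sum_attach (Finset.Iio i)
    (fun j => (if (bt8Rfun N β v j).2 then 0 else (β j i : ℝ)) * (bt8Rfun N β v j).1)

open Classical in
lemma bt8Rfun_snd {N : ℕ} (β : Fin N → Fin N → ℤ) (v : Fin N → ℝ) (i : Fin N) :
    (bt8Rfun N β v i).2 = if 0 ≤ (bt8Rfun N β v i).1 then true else false := by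
  rw [bt8Rfun]


lemma bt8_complete {N : ℕ} (β : Fin N → Fin N → ℤ) (v : Fin N → ℝ) :
    ∃ ε : Fin N → Bool, v ∈ coneOf N β ε Finset.univ := by
  classical
  refine ⟨fun i => (bt8Rfun N β v i).2,
    fun i => if (bt8Rfun N β v i).2 then (bt8Rfun N β v i).1 else -(bt8Rfun N β v i).1,
    fun i => ?_, by simp, ?_⟩
  · show 0 ≤ if (bt8Rfun N β v i).2 = true then (bt8Rfun N β v i).1 else -(bt8Rfun N β v i).1
    by_cases h0 : 0 ≤ (bt8Rfun N β v i).1 <;>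
      · rw [bt8Rfun_snd]
        simp [h0]
        try linarith
  · funext k
    rw [bt8_sum_smul_apply]
    have e1 : (if (bt8Rfun N β v k).2 = true then
        (if (bt8Rfun N β v k).2 = true then (bt8Rfun N β v k).1 else -(bt8Rfun N β v k).1)
        else -(if (bt8Rfun N β v k).2 = true then (bt8Rfun N β v k).1 else -(bt8Rfun N β v k).1))
        = (bt8Rfun N β v k).1 := by
      by_cases h : (bt8Rfun N β v k).2 = true <;> simp [h]
    have e2 : ∑ j ∈ Finset.Iio k, (if (bt8Rfun N β v j).2 = true then 0 else -(β j k : ℝ)) *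
        (if (bt8Rfun N β v j).2 = true then (bt8Rfun N β v j).1 else -(bt8Rfun N β v j).1)
        = ∑ j ∈ Finset.Iio k,
          (if (bt8Rfun N β v j).2 = true then 0 else (β j k : ℝ)) * (bt8Rfun N β v j).1 := by
      refine Finset.sum_congr rfl fun j _ => ?_
      by_cases h : (bt8Rfun N β v j).2 = true <;> simp [h]
    rw [e1, e2]
    have := bt8Rfun_fst β v k
    linarith

lemma bt8_inter_eq {N : ℕ} (β : Fin N → Fin N → ℤ) (ε ε' : Fin N → Bool) (I I' : Finset (Fin N)) :
    coneOf N β ε I ∩ coneOf N β ε' I' =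
      coneOf N β ε ((I ∩ I').filter fun i => ε i = ε' i) := by
  classical
  ext v
  constructor
  · rintro ⟨⟨c, hc0, hcI, hcv⟩, ⟨c', hc'0, hc'I, hc'v⟩⟩
    have hv : ∀ k : Fin N,
        (if ε k then c k else -c k)
          + ∑ j ∈ Finset.Iio k, (if ε j then 0 else -(β j k : ℝ)) * c j
        = (if ε' k then c' k else -c' k)
          + ∑ j ∈ Finset.Iio k, (if ε' j then 0 else -(β j k : ℝ)) * c' j := by
      intro k
      rw [← bt8_sum_smul_apply, ← bt8_sum_smul_apply, ← hcv, ← hc'v]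
    have key : ∀ n : ℕ, ∀ k : Fin N, (k : ℕ) = n →
        (c k = c' k ∧ (ε k = ε' k ∨ c k = 0)) := by
      intro n
      induction n using Nat.strong_induction_on with
      | _ n IH =>
        intro k hk
        have hS : ∑ j ∈ Finset.Iio k, (if ε j then 0 else -(β j k : ℝ)) * c j
            = ∑ j ∈ Finset.Iio k, (if ε' j then 0 else -(β j k : ℝ)) * c' j := by
          refine Finset.sum_congr rfl fun j hj => ?_
          have hjk : (j : ℕ) < n := hk ▸ (Fin.lt_def.mp (Finset.mem_Iio.mp hj))
          obtain ⟨hcc, hor⟩ := IH j hjk j rfl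
          rcases hor with h | h
          · rw [h, hcc]
          · rw [hcc] at h ⊢
            rw [h, mul_zero, mul_zero]
        have E : (if ε k then c k else -c k) = (if ε' k then c' k else -c' k) := by
          have := hv k
          rw [hS] at this
          linarith
        have h1 := hc0 k
        have h2 := hc'0 k
        cases hek : ε k <;> cases hek' : ε' k <;> rw [hek, hek'] at E <;> simp at E
        · exact ⟨E, Or.inl rfl⟩
        · constructor
          · linarith
          · right; linarith
        · constructor
          · linarith
          · right; linarith
        · exact ⟨E, Or.inl rfl⟩
    refine ⟨c, hc0, fun i hi => ?_, hcv⟩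
    simp only [Finset.mem_filter, Finset.mem_inter] at hi
    push_neg at hi
    by_cases h1 : i ∈ I
    · by_cases h2 : i ∈ I'
      · have h3 := hi ⟨h1, h2⟩
        rcases (key (i : ℕ) i rfl).2 with h | h
        · exact absurd h h3
        · exact h
      · rw [(key (i : ℕ) i rfl).1]; exact hc'I i h2
    · exact hcI i h1
  · rintro ⟨c, hc0, hcJ, hcv⟩
    have hsub : ((I ∩ I').filter fun i => ε i = ε' i) ⊆ I ∩ I' := Finset.filter_subset _ _
    constructor
    · exact ⟨c, hc0, fun i hi => hcJ i fun hm =>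
        hi (Finset.mem_inter.mp (hsub hm)).1, hcv⟩
    · refine ⟨c, hc0, fun i hi => hcJ i fun hm =>
        hi (Finset.mem_inter.mp (hsub hm)).2, ?_⟩
      rw [hcv]
      refine Finset.sum_congr rfl fun i _ => ?_
      by_cases hi : i ∈ (I ∩ I').filter fun i => ε i = ε' i
      · have : ε i = ε' i := (Finset.mem_filter.mp hi).2
        congr 1
        funext k
        rw [show gen N β ε' i = gen N β ε i by unfold gen; rw [this]]
      · rw [hcJ i hi, zero_smul, zero_smul]

lemma bt8_basis_exists {N : ℕ} (β : Fin N → Fin N → ℤ) (ε : Fin N → Bool) :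
    ∃ b : Module.Basis (Fin N) ℤ (Fin N → ℤ), ∀ i, b i = gen N β ε i := by
  classical
  set M : Matrix (Fin N) (Fin N) ℤ := Matrix.of fun k i => gen N β ε i k with hM
  have htri : M.BlockTriangular OrderDual.toDual := by
    intro i j hij
    exact bt8_gen_lt hij
  have hdet : IsUnit M.det := by
    rw [Matrix.det_of_lowerTriangular M htri]
    refine IsUnit.of_mul_eq_one (∏ i, M i i) ?_
    rw [← Finset.prod_mul_distrib]
    refine Finset.prod_eq_one fun i _ => ?_
    show gen N β ε i i * gen N β ε i i = 1
    rw [bt8_gen_self]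
    by_cases h : ε i <;> simp [h]
  have hinv : Invertible M := M.invertibleOfIsUnitDet hdet
  refine ⟨(Pi.basisFun ℤ (Fin N)).map (M.toLinearEquiv' hinv), fun i => ?_⟩
  rw [Module.Basis.map_apply, Pi.basisFun_apply]
  show Matrix.toLin' M (Pi.single i 1) = _
  rw [Matrix.toLin'_apply, Matrix.mulVec_single]
  funext k
  simp [hM]

/-- The Bott-tower fan is a smooth complete fan: each maximal set of generators is a
`ℤ`-basis (so all its cones are smooth simplicial cones), any two cones meet in the common
face spanned by their common generators, and the maximal cones cover `ℝ^N`. -/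
theorem stmt8 (N : ℕ) (hN : 1 ≤ N) (β : Fin N → Fin N → ℤ) :
    (∀ ε : Fin N → Bool, ∃ b : Module.Basis (Fin N) ℤ (Fin N → ℤ), ∀ i, b i = gen N β ε i) ∧
    (∀ ε ε' : Fin N → Bool, ∀ I I' : Finset (Fin N),
      coneOf N β ε I ∩ coneOf N β ε' I' =
        coneOf N β ε ((I ∩ I').filter fun i => ε i = ε' i)) ∧
    (∀ v : Fin N → ℝ, ∃ ε : Fin N → Bool, v ∈ coneOf N β ε Finset.univ) :=
  ⟨fun ε => bt8_basis_exists β ε, fun ε ε' I I' => bt8_inter_eq β ε ε' I I',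
    fun v => bt8_complete β v⟩
end

section
/- With e_i^+ the standard basis of ℝ^N and e_i^- := -e_i^+ - ∑_{j>i} β_{ij} e_j^+: for every v ∈ ℝ^N there exists ε ∈ {+,-}^N and nonnegative reals c_1,…,c_N such that v = ∑_i c_i e_i^{ε_i}. (Completeness of the Bott-tower fan: the 2^N simplicial cones cover ℝ^N.) -/
open Finset

/-- `e_i^- = -e_i^+ - ∑_{j>i} β_{ij} e_j^+` in `ℝ^N` (real coefficients allowed). -/
def eMinusR (N : ℕ) (β : Fin N → Fin N → ℝ) (i : Fin N) : Fin N → ℝ :=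
  -Pi.single i (1 : ℝ) -
    ∑ j ∈ Finset.univ.filter fun j : Fin N => i < j, β i j • (Pi.single j (1 : ℝ) : Fin N → ℝ)

lemma eMinusR_apply_of_le (N : ℕ) (β : Fin N → Fin N → ℝ) (i k : Fin N) (h : k ≤ i) :
    eMinusR N β i k = if k = i then -1 else 0 := by
  unfold eMinusR
  simp only [Pi.sub_apply, Pi.neg_apply, Finset.sum_apply, Pi.smul_apply, smul_eq_mul]
  rw [Finset.sum_eq_zero, sub_zero]
  · rcases eq_or_ne k i with rfl | hne
    · simp
    · simp [Pi.single_eq_of_ne hne, hne]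
  · intro j hj
    simp only [mem_filter] at hj
    have hkj : k ≠ j := ne_of_lt (lt_of_le_of_lt h hj.2)
    rw [Pi.single_eq_of_ne hkj, mul_zero]

/-- Completeness of the Bott-tower fan: every `v ∈ ℝ^N` is a nonnegative combination of
`e_1^{ε_1}, …, e_N^{ε_N}` for some sign vector `ε`. -/
theorem stmt9 (N : ℕ) (hN : 1 ≤ N) (β : Fin N → Fin N → ℝ) (v : Fin N → ℝ) :
    ∃ ε : Fin N → Bool, ∃ c : Fin N → ℝ, (∀ i, 0 ≤ c i) ∧
      v = ∑ i, c i • (if ε i then Pi.single i (1 : ℝ) else eMinusR N β i) := by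
  suffices h : ∀ n : ℕ, ∃ ε : Fin N → Bool, ∃ c : Fin N → ℝ, (∀ i, 0 ≤ c i) ∧
      (∀ i : Fin N, n ≤ i.val → c i = 0) ∧
      ∀ k : Fin N, k.val < n →
        v k = (∑ i, c i • (if ε i then Pi.single i (1 : ℝ) else eMinusR N β i)) k by
    obtain ⟨ε, c, h1, _, h3⟩ := h N
    exact ⟨ε, c, h1, funext fun k => h3 k k.isLt⟩
  intro n
  induction n with
  | zero =>
      exact ⟨fun _ => true, 0, fun i => le_refl 0, fun i _ => rfl,
        fun k hk => absurd hk (Nat.not_lt_zero _)⟩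
  | succ n ih =>
      obtain ⟨ε, c, h1, h2, h3⟩ := ih
      by_cases hn : n < N
      · set m : Fin N := ⟨n, hn⟩ with hm
        set w : (Fin N → Bool) → Fin N → (Fin N → ℝ) := fun e i =>
          if e i then Pi.single i (1 : ℝ) else eMinusR N β i with hw
        set S : Fin N → ℝ := ∑ i, c i • w ε i with hS
        set t : ℝ := v m - S m with ht
        set ε' : Fin N → Bool := Function.update ε m (decide (0 ≤ t)) with hε'
        set c' : Fin N → ℝ := Function.update c m |t| with hc'
        have hcm : c m = 0 := h2 m (le_refl n)
        have hwm : ∀ k : Fin N, k ≠ m → k ≤ m → w ε' m k = 0 := by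
          intro k hkm hle
          simp only [hw]
          by_cases hb : ε' m = true
          · simp [hb, Pi.single_eq_of_ne hkm]
          · simp only [Bool.not_eq_true] at hb
            rw [hb, if_neg Bool.false_ne_true, eMinusR_apply_of_le N β m k hle, if_neg hkm]
        have hsum : (∑ i, c' i • w ε' i) = S + |t| • w ε' m := by
          have key : ∀ i, c' i • w ε' i
              = c i • w ε i + (if i = m then |t| • w ε' m else 0) := by
            intro i
            rcases eq_or_ne i m with rfl | hne
            · simp [hc', hcm, Function.update_self]
            · rw [if_neg hne, add_zero, hc', hε', Function.update_of_ne hne,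
                hw]
              simp only [Function.update_of_ne hne]
          simp only [key]
          rw [Finset.sum_add_distrib, Finset.sum_ite_eq' Finset.univ m,
            if_pos (Finset.mem_univ m), hS]
        refine ⟨ε', c', ?_, ?_, ?_⟩
        · intro i
          rcases eq_or_ne i m with rfl | hne
          · rw [hc', Function.update_self]; exact abs_nonneg t
          · rw [hc', Function.update_of_ne hne]; exact h1 i
        · intro i hi
          have hne : i ≠ m := by
            intro e; rw [e] at hi; exact absurd hi (by simp [hm])
          rw [hc', Function.update_of_ne hne]
          exact h2 i (Nat.le_of_succ_le hi)
        · intro k hk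
          rw [hsum, Pi.add_apply, Pi.smul_apply, smul_eq_mul]
          rcases Nat.lt_succ_iff_lt_or_eq.mp hk with hk' | hk'
          · have hkm : k ≠ m := by
              intro e; rw [e] at hk'; exact absurd hk' (lt_irrefl n)
            rw [hwm k hkm (le_of_lt (by exact hk' : k.val < m.val)), mul_zero, add_zero]
            exact h3 k hk'
          · have hkm : k = m := Fin.ext hk'
            rw [hkm]
            have hwmm : w ε' m m = if 0 ≤ t then 1 else -1 := by
              simp only [hw, hε']
              simp only [Function.update_self]
              by_cases hb : 0 ≤ t
              · simp [hb]
              · rw [decide_eq_false hb, if_neg Bool.false_ne_true, if_neg hb,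
                  eMinusR_apply_of_le N β m m (le_refl m), if_pos rfl]
            rw [hwmm]
            by_cases hb : 0 ≤ t
            · rw [if_pos hb, mul_one, abs_of_nonneg hb, ht]; ring
            · rw [if_neg hb, abs_of_neg (lt_of_not_ge hb), ht]; ring
      · refine ⟨ε, c, h1, fun i hi => h2 i (Nat.le_of_succ_le hi), fun k hk => ?_⟩
        exact h3 k (lt_of_lt_of_le k.isLt (Nat.le_of_not_lt hn))
end
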